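/- Let U be the 4×4 matrix with rows (0,1,0,0),(1,0,0,0),(0,0,1,0),(0,0,0,1), and let R = (1/(1-i)) · diag-block matrix with diagonal blocks [1], [2], and ((1,-i),(-i,1)). Then R ∈ U(U, ℚ(i)), i.e., R* U R = U, and R⁴ = diag(-1/4, -4, 1, 1). -/
import Mathlib


open Matrix Complex

/-- The matrix `U` with rows (0,1,0,0), (1,0,0,0), (0,0,1,0), (0,0,0,1), over `ℂ`. -/
def UmatC : Matrix (Fin 4) (Fin 4) ℂ := !![0,1,0,0; 1,0,0,0; 0,0,1,0; 0,0,0,1]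

/-- The mean generating transformation `R`. -/
noncomputable def Rmat : Matrix (Fin 4) (Fin 4) ℂ :=
  !![1/(1-I), 0, 0, 0;
     0, 2/(1-I), 0, 0;
     0, 0, 1/(1-I), -I/(1-I);
     0, 0, -I/(1-I), 1/(1-I)]

def Maux : Matrix (Fin 4) (Fin 4) ℂ := !![1,0,0,0; 0,2,0,0; 0,0,1,-I; 0,0,-I,1]

lemma h1I : (1 - I : ℂ) ≠ 0 := by
  intro h; have := congrArg Complex.re h; simp at this

lemma hcinv : ((1-I):ℂ)⁻¹ = 1/2 + I*(1/2) := by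
  apply inv_eq_of_mul_eq_one_right
  have : I * I = -1 := Complex.I_mul_I
  ring_nf
  rw [Complex.I_sq]
  ring

lemma hR : Rmat = ((1+I)/2 : ℂ) • Maux := by
  ext i j
  fin_cases i <;> fin_cases j <;>
    simp [Rmat, Maux, Matrix.vecHead, Matrix.vecTail, div_eq_mul_inv, hcinv] <;> ring

lemma hM2 : Maux ^ 2 = !![1,0,0,0; 0,4,0,0; 0,0,0,-2*I; 0,0,-2*I,0] := by
  rw [sq]
  ext i j
  fin_cases i <;> fin_cases j <;>
    simp [Maux, Matrix.mul_apply, Fin.sum_univ_four, Matrix.vecHead, Matrix.vecTail] <;>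
    ring_nf <;> simp [Complex.I_sq] <;> ring

lemma hMH : Mauxᴴ = !![1,0,0,0; 0,2,0,0; 0,0,1,I; 0,0,I,1] := by
  ext i j
  fin_cases i <;> fin_cases j <;> simp [Maux, Matrix.vecHead, Matrix.vecTail]

set_option maxHeartbeats 1600000 in
theorem Rmat_unitary_and_fourth_power :
    Rmatᴴ * UmatC * Rmat = UmatC ∧
    Rmat ^ 4 = Matrix.diagonal ![-(1/4 : ℂ), -4, 1, 1] := by
  constructor
  · rw [hR]
    have hs : ((1+I)/2 : ℂ) * star ((1+I)/2) = 1/2 := by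
      rw [Complex.star_def]
      simp only [map_div₀, map_add, _root_.map_one, Complex.conj_I, Complex.conj_ofNat]
      rw [div_mul_div_comm]
      ring_nf
      rw [Complex.I_sq]
      norm_num
    rw [Matrix.conjTranspose_smul, Matrix.smul_mul, Matrix.mul_smul, Matrix.smul_mul,
      smul_smul, hs, hMH]
    ext i j
    fin_cases i <;> fin_cases j <;>
      simp [Maux, UmatC, Matrix.mul_apply, Fin.sum_univ_four, Matrix.smul_apply,
        Matrix.vecHead, Matrix.vecTail] <;>
      ring_nf <;> simp [Complex.I_sq] <;> ring
  · rw [hR, smul_pow]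
    have hs : (((1+I)/2 : ℂ))^4 = -(1/4) := by
      have h2 : ((1+I)/2 : ℂ)^2 = I/2 := by
        have e : ((1:ℂ)+I)^2 = 2*I := by rw [add_sq, Complex.I_sq]; ring
        rw [div_pow, e]; ring
      rw [show (4:ℕ) = 2*2 from rfl, pow_mul, h2, div_pow, Complex.I_sq]; norm_num
    have hM4 : Maux ^ 4 = !![1,0,0,0; 0,16,0,0; 0,0,-4,0; 0,0,0,-4] := by
      have e : Maux ^ 4 = (Maux ^ 2) ^ 2 := by rw [← pow_mul]
      rw [e, hM2, sq]
      ext i j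
      fin_cases i <;> fin_cases j <;>
        simp [Matrix.mul_apply, Fin.sum_univ_four, Matrix.vecHead, Matrix.vecTail] <;>
        ring_nf <;> simp [Complex.I_sq] <;> ring
    rw [hs, hM4]
    ext i j
    fin_cases i <;> fin_cases j <;>
      simp [Matrix.diagonal, Matrix.smul_apply, Matrix.vecHead, Matrix.vecTail] <;>
      norm_num
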